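/- arXiv:1607.06244 — 2 statements merged into one kernel-verified Lean document; each statement's English description precedes it below -/
import Mathlib

section
/- There is no polynomial Q with integer coefficients all of which are nonnegative such that 1 + X + X^4 + X^5 = 1 + X^5 + (1 + X)·Q in ℤ[X]. (Hence the Morse-Bott polynomial MB_t(f) = 1 + t + t^4 + t^5 of the counterexample function and the Poincaré polynomial P_t(ℝP^5) = 1 + t^5 violate the Morse-Bott inequalities.) -/
open Polynomial

/-- There is no polynomial `Q ∈ ℤ[X]` with all coefficients nonnegative such that
`1 + X + X^4 + X^5 = 1 + X^5 + (1 + X) * Q`. -/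
theorem no_morse_bott_polynomial :
    ¬ ∃ Q : Polynomial ℤ, (∀ i, 0 ≤ Q.coeff i) ∧
      (1 + X + X ^ 4 + X ^ 5 : Polynomial ℤ) = 1 + X ^ 5 + (1 + X) * Q := by
  rintro ⟨Q, hpos, heq⟩
  have hne : (1 + X : Polynomial ℤ) ≠ 0 := by
    intro h
    have := congrArg (fun p => p.coeff 0) h
    simp at this
  have hQ : Q = X - X ^ 2 + X ^ 3 := by
    apply mul_left_cancel₀ hne
    have : (1 + X : Polynomial ℤ) * Q = X + X ^ 4 := by linear_combination -heq
    rw [this]; ring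
  have := hpos 2
  rw [hQ] at this
  simp [coeff_one, coeff_X] at this
end

section
/- Let g : ℝ⁶ \ {0} → ℝ be given by g(x) = (x₅² − x₄²)/‖x‖². For every x ≠ 0, the (Fréchet) derivative of g vanishes at x if and only if one of the following holds: (x₄ = 0 and x₅ = 0), or (xᵢ = 0 for all i ≠ 4), or (xᵢ = 0 for all i ≠ 5). In other words, the critical set of g is exactly the union of the three eigenspaces (minus the origin) of the diagonal matrix diag(0,0,0,0,−1,1). -/
/-!
`g` is the Rayleigh quotient `⟪A x, x⟫ / ‖x‖²` of the symmetric matrix `A = diag(0,0,0,0,-1,1)`.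
For a symmetric operator the derivative of the Rayleigh quotient `R` at `x ≠ 0` is
`v ↦ 2 ⟪A x - R x • x, v⟫ / ‖x‖²`, so the critical points are exactly the eigenvectors of `A`.
An eigenvector of a diagonal matrix with eigenvalue `μ` vanishes off the entries where the
diagonal equals `μ`; the three eigenvalues `0, -1, 1` give the three cases.
-/

open ContinuousLinearMap Matrix

namespace LinearMap.IsSymmetric

variable {F : Type*} [NormedAddCommGroup F] [InnerProductSpace ℝ F] {T : F →L[ℝ] F}

theorem hasFDerivAt_rayleighQuotient (hT : (T : F →ₗ[ℝ] F).IsSymmetric) {x : F} (hx : x ≠ 0) :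
    HasFDerivAt T.rayleighQuotient
      ((2 / ‖x‖ ^ 2) • innerSL ℝ (T x - T.rayleighQuotient x • x)) x := by
  have hinv := (hasDerivAt_inv (by positivity : ‖x‖ ^ 2 ≠ 0)).comp_hasFDerivAt x
    (hasStrictFDerivAt_norm_sq x).hasFDerivAt
  refine ((hT.hasStrictFDerivAt_reApplyInnerSelf x).hasFDerivAt.mul hinv).congr_fderiv ?_
  ext v
  simp only [neg_smul, smul_neg, Function.comp_apply, _root_.add_apply, _root_.neg_apply,
    _root_.smul_apply, coe_innerSL_apply, nsmul_eq_mul, Nat.cast_ofNat, smul_eq_mul, real_inner_comm,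
    map_sub, map_smul, _root_.sub_apply]
  field_simp
  ring

theorem fderiv_rayleighQuotient_eq_zero_iff (hT : (T : F →ₗ[ℝ] F).IsSymmetric) {x : F}
    (hx : x ≠ 0) : fderiv ℝ T.rayleighQuotient x = 0 ↔ ∃ μ : ℝ, T x = μ • x := by
  rw [(hT.hasFDerivAt_rayleighQuotient hx).fderiv, smul_eq_zero_iff_right (by positivity),
    map_eq_zero_iff _ fun _ _ ↦ innerSL_inj.mp, sub_eq_zero]
  refine ⟨fun h ↦ ⟨_, h⟩, fun ⟨μ, hμ⟩ ↦ ?_⟩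
  have hR : T.rayleighQuotient x = μ := by
    rw [rayleighQuotient, reApplyInnerSelf_apply, hμ, real_inner_smul_left,
      real_inner_self_eq_norm_sq, RCLike.re_to_real]
    field_simp
  rw [hR, hμ]

end LinearMap.IsSymmetric

namespace Matrix

variable {ι : Type*} [Fintype ι] [DecidableEq ι] (d : ι → ℝ)

theorem toEuclideanCLM_diagonal_apply (x : EuclideanSpace ℝ ι) (i : ι) :
    toEuclideanCLM (𝕜 := ℝ) (diagonal d) x i = d i * x i := by
  simp [mulVec_diagonal]

theorem isSymmetric_toEuclideanCLM_diagonal :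
    (toEuclideanCLM (𝕜 := ℝ) (diagonal d) :
      EuclideanSpace ℝ ι →ₗ[ℝ] EuclideanSpace ℝ ι).IsSymmetric :=
  isSymmetric_toEuclideanLin_iff.mpr (isHermitian_diagonal d)

theorem reApplyInnerSelf_toEuclideanCLM_diagonal (x : EuclideanSpace ℝ ι) :
    (toEuclideanCLM (𝕜 := ℝ) (diagonal d)).reApplyInnerSelf x = ∑ i, d i * x i ^ 2 := by
  simp only [reApplyInnerSelf_apply, RCLike.re_to_real, PiLp.inner_apply,
    toEuclideanCLM_diagonal_apply, RCLike.inner_apply, conj_trivial]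
  exact Finset.sum_congr rfl fun i _ ↦ by ring

theorem toEuclideanCLM_diagonal_apply_eq_smul_iff (x : EuclideanSpace ℝ ι) (μ : ℝ) :
    toEuclideanCLM (𝕜 := ℝ) (diagonal d) x = μ • x ↔ ∀ i, d i ≠ μ → x i = 0 := by
  simp only [PiLp.ext_iff, toEuclideanCLM_diagonal_apply, PiLp.smul_apply, smul_eq_mul,
    ← sub_eq_zero (a := d _ * _), ← sub_mul, mul_eq_zero, sub_eq_zero]
  exact forall_congr' fun i ↦ or_iff_not_imp_left

end Matrix

theorem exists_forall_diag_ne_imp_eq_zero_iff (v : Fin 6 → ℝ) :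
    (∃ μ : ℝ, ∀ i, ![0, 0, 0, 0, -1, 1] i ≠ μ → v i = 0) ↔
      (v 4 = 0 ∧ v 5 = 0) ∨ (∀ i, i ≠ 4 → v i = 0) ∨ (∀ i, i ≠ 5 → v i = 0) := by
  constructor
  · rintro ⟨μ, hμ⟩
    obtain rfl | hμ₄ := eq_or_ne μ (-1)
    · exact .inr <| .inl fun i hi ↦ hμ i (by revert hi; fin_cases i <;> norm_num [Fin.ext_iff])
    obtain rfl | hμ₅ := eq_or_ne μ 1
    · exact .inr <| .inr fun i hi ↦ hμ i (by revert hi; fin_cases i <;> norm_num [Fin.ext_iff])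
    exact .inl ⟨hμ 4 (by simpa [eq_comm] using hμ₄), hμ 5 (by simpa [eq_comm] using hμ₅)⟩
  · rintro (⟨h₄, h₅⟩ | h | h)
    · exact ⟨0, fun i hi ↦ by fin_cases i <;> simp_all⟩
    · exact ⟨-1, fun i hi ↦ h i (by rintro rfl; simp at hi)⟩
    · exact ⟨1, fun i hi ↦ h i (by rintro rfl; simp at hi)⟩

/-- For `g x = (x₅² - x₄²)/‖x‖²` on `ℝ⁶ \ {0}`, the Fréchet derivative of `g` vanishes
at `x ≠ 0` iff `x₄ = x₅ = 0`, or `xᵢ = 0` for all `i ≠ 4`, or `xᵢ = 0` for all `i ≠ 5`. -/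
theorem critical_set_of_g
    (g : EuclideanSpace ℝ (Fin 6) → ℝ)
    (hg : ∀ x, g x = (x 5 ^ 2 - x 4 ^ 2) / ‖x‖ ^ 2)
    (x : EuclideanSpace ℝ (Fin 6)) (hx : x ≠ 0) :
    fderiv ℝ g x = 0 ↔
      (x 4 = 0 ∧ x 5 = 0) ∨ (∀ i, i ≠ 4 → x i = 0) ∨ (∀ i, i ≠ 5 → x i = 0) := by
  have hg_eq : g = (toEuclideanCLM (𝕜 := ℝ) (diagonal ![0, 0, 0, 0, -1, 1])).rayleighQuotient := by
    funext y
    rw [hg, rayleighQuotient, reApplyInnerSelf_toEuclideanCLM_diagonal, Fin.sum_univ_six]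
    simp only [Fin.isValue, cons_val_zero, cons_val_one, cons_val, zero_mul, one_mul, neg_mul,
      add_zero, zero_add]
    ring
  rw [hg_eq, (isSymmetric_toEuclideanCLM_diagonal _).fderiv_rayleighQuotient_eq_zero_iff hx]
  simp only [toEuclideanCLM_diagonal_apply_eq_smul_iff]
  exact exists_forall_diag_ne_imp_eq_zero_iff x.ofLp
end
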